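/- arXiv:1706.04977 — 2 statements merged into one kernel-verified Lean document; each statement's English description precedes it below -/
import Mathlib

section
/- Let g : [a,b] → ℝ be continuously differentiable, and let f : [a,b] → ℝ be smooth with f' monotone and |f'(x)| ≥ Λ > 0 on [a,b]. Then |∫_a^b g(x) e^{2πif(x)} dx| ≤ (1/(πΛ)) (|g(b)| + ∫_a^b |g'(x)| dx). -/
open Real MeasureTheory intervalIntegral Filter Set Topology ContDiff

lemma monotoneOn_deriv_nonneg' {F : ℝ → ℝ} {a b x y : ℝ} (hab : a < b)
    (hm : MonotoneOn F (Set.Icc a b)) (hx : x ∈ Set.Icc a b)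
    (hd : HasDerivAt F y x) : 0 ≤ y := by
  rcases lt_or_eq_of_le hx.2 with hxb | hxb
  · have ht : Tendsto (slope F x) (𝓝[>] x) (𝓝 y) :=
      (hasDerivAt_iff_tendsto_slope.mp hd).mono_left
        (nhdsWithin_mono x fun z hz => ne_of_gt hz)
    refine ge_of_tendsto ht ?_
    filter_upwards [Ioo_mem_nhdsGT_of_mem (Set.mem_Ico.mpr ⟨le_rfl, hxb⟩)] with z hz
    rw [slope_def_field]
    apply div_nonneg
    · exact sub_nonneg.2 (hm hx ⟨hx.1.trans hz.1.le, hz.2.le⟩ hz.1.le)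
    · exact sub_nonneg.2 hz.1.le
  · have hax : a < x := hxb ▸ hab
    have ht : Tendsto (slope F x) (𝓝[<] x) (𝓝 y) :=
      (hasDerivAt_iff_tendsto_slope.mp hd).mono_left
        (nhdsWithin_mono x fun z hz => ne_of_lt hz)
    refine ge_of_tendsto ht ?_
    filter_upwards [Ioo_mem_nhdsLT_of_mem (Set.mem_Ioc.mpr ⟨hax, le_rfl⟩)] with z hz
    rw [slope_def_field, div_nonneg_iff]
    exact Or.inr ⟨sub_nonpos.2 (hm ⟨hz.1.le, hz.2.le.trans hx.2⟩ hx hz.2.le),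
      sub_nonpos.2 hz.2.le⟩

set_option maxHeartbeats 1000000 in
lemma osc_base (a b Λ : ℝ) (hab : a ≤ b) (f : ℝ → ℝ)
    (hf : ContDiff ℝ (⊤ : ℕ∞) f)
    (hmono : MonotoneOn (deriv f) (Set.Icc a b) ∨ AntitoneOn (deriv f) (Set.Icc a b))
    (hΛ : 0 < Λ) (hf' : ∀ x ∈ Set.Icc a b, Λ ≤ |deriv f x|) :
    ‖∫ x in a..b, Complex.exp (2 * Real.pi * Complex.I * (f x))‖ ≤ 1 / (Real.pi * Λ) := by
  rcases eq_or_lt_of_le hab with rfl | hab'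
  · simp [intervalIntegral.integral_same]
    positivity
  set f₁ := deriv f with hf₁def
  set f₂ := deriv (deriv f) with hf₂def
  have hfi : ContDiff ℝ (∞ : WithTop ℕ∞) f := hf.of_le (by simp)
  have hf₁ : ContDiff ℝ (∞ : WithTop ℕ∞) f₁ := (contDiff_infty_iff_deriv.mp hfi).2
  have hf₁d : Differentiable ℝ f₁ := hf₁.differentiable (by norm_num)
  have hf₁c : Continuous f₁ := hf₁.continuous
  have hf₂c : Continuous f₂ := (contDiff_infty_iff_deriv.mp hf₁).2.continuous
  have hfc : Continuous f := hf.continuous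
  have hne : ∀ x ∈ Set.Icc a b, f₁ x ≠ 0 := fun x hx h0 => by
    have := hf' x hx; rw [h0, abs_zero] at this; linarith
  set ψ : ℝ → ℝ := fun x => (f₁ x)⁻¹ with hψdef
  set ψ' : ℝ → ℝ := fun x => -f₂ x / (f₁ x) ^ 2 with hψ'def
  have hψd : ∀ x ∈ Set.Icc a b, HasDerivAt ψ (ψ' x) x := fun x hx =>
    ((hf₁d x).hasDerivAt).inv (hne x hx)
  have huIcc : Set.uIcc a b = Set.Icc a b := Set.uIcc_of_le hab
  have hψ'c : ContinuousOn ψ' (Set.Icc a b) :=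
    (hf₂c.continuousOn.neg).div ((hf₁c.continuousOn).pow 2)
      (fun x hx => pow_ne_zero 2 (hne x hx))
  have hψ'int : IntervalIntegrable ψ' volume a b :=
    (huIcc ▸ hψ'c).intervalIntegrable
  set E : ℝ → ℂ := fun x => Complex.exp (2 * Real.pi * Complex.I * (f x)) with hEdef
  have hEd : ∀ x, HasDerivAt E (E x * (2 * Real.pi * Complex.I * f₁ x)) x := by
    intro x
    have h1 : HasDerivAt (fun y : ℝ => ((f y : ℂ))) ((f₁ x : ℂ)) x :=
      ((hfi.differentiable (by norm_num) x).hasDerivAt).ofReal_comp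
    have h2 : HasDerivAt (fun y : ℝ => (2 * Real.pi * Complex.I * (f y : ℂ)))
        (2 * Real.pi * Complex.I * (f₁ x : ℂ)) x := h1.const_mul _
    exact h2.cexp
  have hEc : Continuous E := by
    apply Complex.continuous_exp.comp
    exact continuous_const.mul (Complex.continuous_ofReal.comp hfc)
  have hE1 : ∀ x, ‖E x‖ = 1 := by
    intro x
    simp only [hEdef, Complex.norm_exp]
    norm_num [Complex.mul_re, Complex.mul_im]
  set φ : ℝ → ℂ := fun x => (2 * Real.pi * Complex.I)⁻¹ * ((ψ x : ℝ) : ℂ) with hφdef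
  set φ' : ℝ → ℂ := fun x => (2 * Real.pi * Complex.I)⁻¹ * ((ψ' x : ℝ) : ℂ) with hφ'def
  have hφd : ∀ x ∈ Set.Icc a b, HasDerivAt φ (φ' x) x := fun x hx =>
    ((hψd x hx).ofReal_comp).const_mul _
  have hφ'int : IntervalIntegrable φ' volume a b := by
    apply ContinuousOn.intervalIntegrable
    rw [huIcc]
    exact continuous_const.continuousOn.mul (Complex.continuous_ofReal.comp_continuousOn hψ'c)
  have h2piI : (2 * (Real.pi : ℂ) * Complex.I) ≠ 0 := Complex.two_pi_I_ne_zero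
  have hIBP : (∫ x in a..b, φ x * (E x * (2 * Real.pi * Complex.I * f₁ x)))
      = φ b * E b - φ a * E a - ∫ x in a..b, φ' x * E x := by
    apply intervalIntegral.integral_mul_deriv_eq_deriv_mul
    · intro x hx; exact hφd x (huIcc ▸ hx)
    · intro x hx; exact hEd x
    · exact hφ'int
    · apply Continuous.intervalIntegrable
      exact hEc.mul (continuous_const.mul (Complex.continuous_ofReal.comp hf₁c))
  have hcongr : (∫ x in a..b, E x)
      = ∫ x in a..b, φ x * (E x * (2 * Real.pi * Complex.I * f₁ x)) := by
    apply intervalIntegral.integral_congr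
    intro x hx
    rw [huIcc] at hx
    have hc : ((f₁ x : ℂ)) ≠ 0 := Complex.ofReal_ne_zero.mpr (hne x hx)
    simp only [hφdef, hψdef, Complex.ofReal_inv]
    field_simp
  ring
  -- norm of φ
  have hnφ : ∀ x, ‖φ x‖ = (2 * Real.pi)⁻¹ * |ψ x| := by
    intro x
    simp only [hφdef, norm_mul, norm_inv, Complex.norm_real, Real.norm_eq_abs]
    congr 1
    norm_num [Complex.norm_two, Complex.norm_I, abs_of_pos Real.pi_pos]
  have hnφ' : ∀ x, ‖φ' x * E x‖ = (2 * Real.pi)⁻¹ * |ψ' x| := by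
    intro x
    rw [norm_mul, hE1, mul_one]
    simp only [hφ'def, norm_mul, norm_inv, Complex.norm_real, Real.norm_eq_abs]
    congr 1
    norm_num [Complex.norm_two, Complex.norm_I, abs_of_pos Real.pi_pos]
  have hFTC : (∫ x in a..b, ψ' x) = ψ b - ψ a :=
    intervalIntegral.integral_eq_sub_of_hasDerivAt
      (fun x hx => hψd x (huIcc ▸ hx)) hψ'int
  have hkey : (∫ x in a..b, |ψ' x|) ≤ |ψ b - ψ a| := by
    rcases hmono with hm | hm
    · have hf₂nn : ∀ x ∈ Set.Icc a b, 0 ≤ f₂ x := fun x hx =>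
        monotoneOn_deriv_nonneg' hab' hm hx (hf₁d x).hasDerivAt
      have hψ'np : ∀ x ∈ Set.Icc a b, ψ' x ≤ 0 := fun x hx =>
        div_nonpos_iff.mpr (Or.inr ⟨neg_nonpos.2 (hf₂nn x hx), sq_nonneg _⟩)
      have h1 : (∫ x in a..b, |ψ' x|) = ∫ x in a..b, -ψ' x :=
        intervalIntegral.integral_congr fun x hx => abs_of_nonpos (hψ'np x (huIcc ▸ hx))
      rw [h1, intervalIntegral.integral_neg, hFTC]
      exact neg_le_abs _
    · have hf₂np : ∀ x ∈ Set.Icc a b, f₂ x ≤ 0 := by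
        intro x hx
        have hmn : MonotoneOn (fun y => -f₁ y) (Set.Icc a b) := fun u hu v hv huv =>
          neg_le_neg (hm hu hv huv)
        have := monotoneOn_deriv_nonneg' hab' hmn hx ((hf₁d x).hasDerivAt.neg)
        linarith
      have hψ'nn : ∀ x ∈ Set.Icc a b, 0 ≤ ψ' x := fun x hx =>
        div_nonneg (neg_nonneg.2 (hf₂np x hx)) (sq_nonneg _)
      have h1 : (∫ x in a..b, |ψ' x|) = ∫ x in a..b, ψ' x :=
        intervalIntegral.integral_congr fun x hx => abs_of_nonneg (hψ'nn x (huIcc ▸ hx))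
      rw [h1, hFTC]
      exact le_abs_self _
  have hstep : ‖∫ x in a..b, E x‖ ≤
      (2 * Real.pi)⁻¹ * (|ψ b| + |ψ a| + |ψ b - ψ a|) := by
    rw [hcongr, hIBP]
    have h1 : ‖φ b * E b - φ a * E a - ∫ x in a..b, φ' x * E x‖ ≤
        ‖φ b * E b‖ + ‖φ a * E a‖ + ‖∫ x in a..b, φ' x * E x‖ := by
      refine le_trans (norm_sub_le _ _) ?_
      have := norm_sub_le (φ b * E b) (φ a * E a)
      linarith
    refine h1.trans ?_
    have h2 : ‖φ b * E b‖ = (2 * Real.pi)⁻¹ * |ψ b| := by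
      rw [norm_mul, hE1, mul_one, hnφ]
    have h3 : ‖φ a * E a‖ = (2 * Real.pi)⁻¹ * |ψ a| := by
      rw [norm_mul, hE1, mul_one, hnφ]
    have h4 : ‖∫ x in a..b, φ' x * E x‖ ≤ (2 * Real.pi)⁻¹ * |ψ b - ψ a| := by
      refine le_trans (intervalIntegral.norm_integral_le_integral_norm hab) ?_
      have h5 : (∫ x in a..b, ‖φ' x * E x‖) = ∫ x in a..b, (2 * Real.pi)⁻¹ * |ψ' x| :=
        intervalIntegral.integral_congr fun x _ => hnφ' x
      rw [h5, intervalIntegral.integral_const_mul]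
      have h2π : (0:ℝ) < (2 * Real.pi)⁻¹ := by positivity
      exact mul_le_mul_of_nonneg_left hkey h2π.le
    rw [h2, h3]
    linarith
  have hsignf : 0 < f₁ a * f₁ b := by
    by_contra hcon
    push_neg at hcon
    rcases mul_nonpos_iff.mp hcon with ⟨h1, h2⟩ | ⟨h1, h2⟩
    · obtain ⟨c, hc, hc0⟩ := intermediate_value_Icc' hab hf₁c.continuousOn
        (Set.mem_Icc.mpr ⟨h2, h1⟩)
      exact hne c hc hc0
    · obtain ⟨c, hc, hc0⟩ := intermediate_value_Icc hab hf₁c.continuousOn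
        (Set.mem_Icc.mpr ⟨h1, h2⟩)
      exact hne c hc hc0
  have hsign : 0 < ψ a * ψ b := by
    simp only [hψdef, ← mul_inv]
    exact inv_pos.mpr hsignf
  have hbd : ∀ x ∈ Set.Icc a b, |ψ x| ≤ 1 / Λ := by
    intro x hx
    simp only [hψdef, abs_inv, one_div]
    exact inv_anti₀ hΛ (hf' x hx)
  have hbda := hbd a (Set.mem_Icc.mpr ⟨le_refl a, hab⟩)
  have hbdb := hbd b (Set.mem_Icc.mpr ⟨hab, le_refl b⟩)
  have h2 : |ψ b| + |ψ a| + |ψ b - ψ a| ≤ 2 * (1 / Λ) := by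
    rcases abs_cases (ψ a) with ⟨ha1, ha2⟩ | ⟨ha1, ha2⟩ <;>
      rcases abs_cases (ψ b) with ⟨hb1, hb2⟩ | ⟨hb1, hb2⟩ <;>
      rcases abs_cases (ψ b - ψ a) with ⟨hc1, hc2⟩ | ⟨hc1, hc2⟩ <;>
      nlinarith [hsign]
  refine hstep.trans ?_
  have h2π : (0:ℝ) < (2 * Real.pi)⁻¹ := by positivity
  refine le_trans (mul_le_mul_of_nonneg_left h2 h2π.le) (le_of_eq ?_)
  have hπ : Real.pi ≠ 0 := Real.pi_ne_zero
  have hΛ' : Λ ≠ 0 := ne_of_gt hΛ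
  field_simp

set_option maxHeartbeats 1000000 in
/-- First-derivative (non-stationary phase) bound: if `f'` is monotone with
`|f'| ≥ Λ > 0` on `[a,b]` and `g` is `C¹`, then
`|∫_a^b g(x) e(f(x)) dx| ≤ (1/(πΛ)) (|g(b)| + ∫_a^b |g'|)`. -/
theorem first_derivative_oscillatory_bound
    (a b Λ : ℝ) (hab : a ≤ b) (f g : ℝ → ℝ)
    (hf : ContDiff ℝ (⊤ : ℕ∞) f) (hg : ContDiff ℝ 1 g)
    (hmono : MonotoneOn (deriv f) (Set.Icc a b) ∨ AntitoneOn (deriv f) (Set.Icc a b))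
    (hΛ : 0 < Λ) (hf' : ∀ x ∈ Set.Icc a b, Λ ≤ |deriv f x|) :
    ‖∫ x in a..b, (g x : ℂ) * Complex.exp (2 * Real.pi * Complex.I * (f x))‖ ≤
      (1 / (Real.pi * Λ)) * (|g b| + ∫ x in a..b, |deriv g x|) := by
  have hC : (0:ℝ) < 1 / (Real.pi * Λ) := by positivity
  rcases eq_or_lt_of_le hab with rfl | hab'
  · simp only [intervalIntegral.integral_same, norm_zero]
    positivity
  set E : ℝ → ℂ := fun x => Complex.exp (2 * Real.pi * Complex.I * (f x)) with hEdef
  have hfc : Continuous f := hf.continuous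
  have hEc : Continuous E := by
    apply Complex.continuous_exp.comp
    exact continuous_const.mul (Complex.continuous_ofReal.comp hfc)
  set G : ℝ → ℂ := fun x => ∫ t in a..x, E t with hGdef
  have hGd : ∀ x, HasDerivAt G (E x) x := fun x =>
    intervalIntegral.integral_hasDerivAt_right (hEc.intervalIntegrable a x)
      (hEc.stronglyMeasurableAtFilter _ _) hEc.continuousAt
  have hGc : Continuous G := by
    rw [continuous_iff_continuousAt]
    exact fun x => (hGd x).continuousAt
  have hbase : ∀ x ∈ Set.Icc a b, ‖G x‖ ≤ 1 / (Real.pi * Λ) := by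
    intro x hx
    have hsub : Set.Icc a x ⊆ Set.Icc a b := Set.Icc_subset_Icc_right hx.2
    exact osc_base a x Λ hx.1 f hf
      (hmono.imp (fun h => h.mono hsub) (fun h => h.mono hsub)) hΛ
      (fun t ht => hf' t (hsub ht))
  have hgd : Differentiable ℝ g := hg.differentiable one_ne_zero
  have hg'c : Continuous (deriv g) := (contDiff_one_iff_deriv.mp hg).2
  have hgcd : ∀ x, HasDerivAt (fun y : ℝ => ((g y : ℝ) : ℂ)) ((deriv g x : ℝ) : ℂ) x :=
    fun x => ((hgd x).hasDerivAt).ofReal_comp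
  have hIBP := intervalIntegral.integral_mul_deriv_eq_deriv_mul
      (u := fun y : ℝ => ((g y : ℝ) : ℂ)) (u' := fun y : ℝ => ((deriv g y : ℝ) : ℂ))
      (v := G) (v' := E)
      (fun x _ => hgcd x) (fun x _ => hGd x)
      ((Complex.continuous_ofReal.comp hg'c).intervalIntegrable a b)
      (hEc.intervalIntegrable a b)
  have hGa : G a = 0 := intervalIntegral.integral_same
  have hgoal : (∫ x in a..b, (g x : ℂ) * Complex.exp (2 * Real.pi * Complex.I * (f x)))
      = ((g b : ℝ) : ℂ) * G b - ∫ x in a..b, ((deriv g x : ℝ) : ℂ) * G x := by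
    rw [show (∫ x in a..b, (g x : ℂ) * Complex.exp (2 * Real.pi * Complex.I * (f x)))
        = ∫ x in a..b, ((g x : ℝ) : ℂ) * E x from rfl, hIBP, hGa]
    ring
  rw [hgoal]
  have h1 : ‖((g b : ℝ) : ℂ) * G b - ∫ x in a..b, ((deriv g x : ℝ) : ℂ) * G x‖ ≤
      ‖((g b : ℝ) : ℂ) * G b‖ + ‖∫ x in a..b, ((deriv g x : ℝ) : ℂ) * G x‖ :=
    norm_sub_le _ _
  have h2 : ‖((g b : ℝ) : ℂ) * G b‖ ≤ |g b| * (1 / (Real.pi * Λ)) := by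
    rw [norm_mul, Complex.norm_real, Real.norm_eq_abs]
    exact mul_le_mul_of_nonneg_left (hbase b (Set.mem_Icc.mpr ⟨hab, le_refl b⟩)) (abs_nonneg _)
  have h3 : ‖∫ x in a..b, ((deriv g x : ℝ) : ℂ) * G x‖ ≤
      (1 / (Real.pi * Λ)) * ∫ x in a..b, |deriv g x| := by
    refine le_trans (intervalIntegral.norm_integral_le_integral_norm hab) ?_
    have hint1 : IntervalIntegrable (fun x => ‖((deriv g x : ℝ) : ℂ) * G x‖) volume a b :=
      (((Complex.continuous_ofReal.comp hg'c).mul hGc).norm).intervalIntegrable a b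
    have hint2 : IntervalIntegrable (fun x => (1 / (Real.pi * Λ)) * |deriv g x|) volume a b :=
      (continuous_const.mul hg'c.abs).intervalIntegrable a b
    have hmonoi : (∫ x in a..b, ‖((deriv g x : ℝ) : ℂ) * G x‖) ≤
        ∫ x in a..b, (1 / (Real.pi * Λ)) * |deriv g x| := by
      refine intervalIntegral.integral_mono_on hab hint1 hint2 ?_
      intro x hx
      rw [norm_mul, Complex.norm_real, Real.norm_eq_abs, mul_comm ((1:ℝ) / (Real.pi * Λ)) _]
      exact mul_le_mul_of_nonneg_left (hbase x hx) (abs_nonneg _)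
    rw [intervalIntegral.integral_const_mul] at hmonoi
    exact hmonoi
  have h4 : (0:ℝ) ≤ ∫ x in a..b, |deriv g x| := by
    apply intervalIntegral.integral_nonneg hab
    intro x _
    exact abs_nonneg _
  calc ‖((g b : ℝ) : ℂ) * G b - ∫ x in a..b, ((deriv g x : ℝ) : ℂ) * G x‖
      ≤ |g b| * (1 / (Real.pi * Λ)) + (1 / (Real.pi * Λ)) * ∫ x in a..b, |deriv g x| := by
        refine h1.trans ?_; linarith
    _ = (1 / (Real.pi * Λ)) * (|g b| + ∫ x in a..b, |deriv g x|) := by ring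
end

section
/- Let t ≥ 2, K with 1 ≤ K ≤ t, a ≍ (N/K)^{1/2}, q ≥ 1, N ≥ 1, and τ ∈ ℝ. Then E(τ) := t^{-1/2} ∫_{aq/N}^1 ∫_1^2 min{(aq/(Nx))^{5/2}, |τ − Kv|^{-5/2}} dv dx ≪ (aq·t^ε/(NK√t)) · min{1, 100K/|τ|}, for any ε > 0. -/
/-!
Interpolating the two terms of the minimum, `min(P, Q) ≤ P^θ Q^(1-θ)`, separates the variables.
The `x`-integral of `(aq/(Nx))^p` is at most `(aq/N)/(p - 1)` for every `p > 1`, while the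
`v`-integral of `|τ - Kv|^(-α)` is `≪ K^(-α)/(1 - α)` for `α < 1`, and at most `2/|τ|` for
`α = 1` once `|τ| ≥ 4K`, because then `|τ - Kv| ≥ |τ|/2` on `[1, 2]`. Small `|τ|` is handled with
`α = 1 - δ`, where `δ ≤ ε` and the loss `K^δ ≤ t^ε` is the `t^ε` of the bound; large `|τ|` with
`α = 1`, which costs nothing.
-/

open Real MeasureTheory intervalIntegral Set

theorem Real.min_le_rpow_mul_rpow {p q θ : ℝ} (hp : 0 ≤ p) (hq : 0 ≤ q) (hθ0 : 0 ≤ θ)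
    (hθ1 : θ ≤ 1) : min p q ≤ p ^ θ * q ^ (1 - θ) := by
  have hm : 0 ≤ min p q := le_min hp hq
  calc min p q = min p q ^ (θ + (1 - θ)) := by rw [add_sub_cancel, rpow_one]
    _ = min p q ^ θ * min p q ^ (1 - θ) := rpow_add' hm (by norm_num)
    _ ≤ p ^ θ * q ^ (1 - θ) :=
      mul_le_mul (rpow_le_rpow hm (min_le_left p q) hθ0)
        (rpow_le_rpow hm (min_le_right p q) (by linarith)) (rpow_nonneg hm _) (rpow_nonneg hp _)

theorem Real.min_rpow_rpow_neg_le {x y p α : ℝ} (hx : 0 ≤ x) (hy : 0 ≤ y) (hp : 0 < p)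
    (hα : 0 ≤ α) (hαp : α ≤ p) : min (x ^ p) (y ^ (-p)) ≤ x ^ (p - α) * y ^ (-α) := by
  have h := min_le_rpow_mul_rpow (rpow_nonneg hx p) (rpow_nonneg hy (-p))
    (div_nonneg (sub_nonneg.2 hαp) hp.le) (div_le_one_of_le₀ (by linarith) hp.le)
  rwa [← rpow_mul hx, ← rpow_mul hy, mul_div_cancel₀ _ hp.ne',
    show -p * (1 - (p - α) / p) = -α by field_simp; ring] at h

theorem intervalIntegral.integral_mono_on_of_nonneg {f g : ℝ → ℝ} {a b : ℝ} (hab : a ≤ b)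
    (hg : IntervalIntegrable g volume a b) (hg0 : ∀ x ∈ Icc a b, 0 ≤ g x)
    (hfg : ∀ x ∈ Icc a b, f x ≤ g x) : ∫ x in a..b, f x ≤ ∫ x in a..b, g x := by
  by_cases hf : IntervalIntegrable f volume a b
  · exact integral_mono_on hab hf hg hfg
  · rw [integral_undef hf]
    exact integral_nonneg hab hg0

theorem intervalIntegrable_div_rpow {B d p : ℝ} (hB : 0 < B) (hBd : B ≤ d) :
    IntervalIntegrable (fun x => (B / x) ^ p) volume B d := by
  refine ContinuousOn.intervalIntegrable fun x hx => ?_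
  rw [uIcc_of_le hBd] at hx
  have hx0 : x ≠ 0 := (hB.trans_le hx.1).ne'
  exact ((continuousAt_const.div continuousAt_id hx0).rpow_const
    (Or.inl (div_ne_zero hB.ne' hx0))).continuousWithinAt

theorem integral_div_rpow_le {B d p : ℝ} (hB : 0 < B) (hBd : B ≤ d) (hp : 1 < p) :
    ∫ x in B..d, (B / x) ^ p ≤ B / (p - 1) := by
  have h0 : (0 : ℝ) ∉ uIcc B d := fun h => by rw [uIcc_of_le hBd] at h; linarith [h.1]
  have hpow : EqOn (fun x => (B / x) ^ p) (fun x => B ^ p * x ^ (-p)) (uIcc B d) := by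
    intro x hx
    rw [uIcc_of_le hBd] at hx
    have hx0 : 0 < x := hB.trans_le hx.1
    show (B / x) ^ p = B ^ p * x ^ (-p)
    rw [div_rpow hB.le hx0.le, rpow_neg hx0.le, div_eq_mul_inv]
  rw [integral_congr hpow, intervalIntegral.integral_const_mul,
    integral_rpow (Or.inr ⟨by linarith, h0⟩)]
  have hd : 0 ≤ d ^ (-p + 1) := rpow_nonneg (hB.le.trans hBd) _
  have hBB : B ^ p * B ^ (-p + 1) = B := by rw [← rpow_add hB]; simp
  calc B ^ p * ((d ^ (-p + 1) - B ^ (-p + 1)) / (-p + 1))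
      = B ^ p * (B ^ (-p + 1) - d ^ (-p + 1)) / (p - 1) := by
        rw [show -p + 1 = -(p - 1) by ring, div_neg, ← neg_div, neg_sub, mul_div_assoc]
    _ ≤ B ^ p * B ^ (-p + 1) / (p - 1) := by gcongr; linarith
    _ = B / (p - 1) := by rw [hBB]

theorem intervalIntegrable_abs_rpow {r : ℝ} (hr : -1 < r) (a b : ℝ) :
    IntervalIntegrable (fun u : ℝ => |u| ^ r) volume a b := by
  have hpos : ∀ c, 0 ≤ c → IntervalIntegrable (fun u : ℝ => |u| ^ r) volume 0 c := by
    intro c hc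
    refine (intervalIntegral.intervalIntegrable_rpow' hr).congr fun u hu => ?_
    rw [uIoc_of_le hc] at hu
    simp only [abs_of_pos hu.1]
  have hzero : ∀ c, IntervalIntegrable (fun u : ℝ => |u| ^ r) volume 0 c := by
    intro c
    rcases le_total 0 c with hc | hc
    · exact hpos c hc
    · rw [IntervalIntegrable.iff_comp_neg]
      simpa using hpos (-c) (by linarith)
  exact (hzero a).symm.trans (hzero b)

theorem integral_neg_self_abs_rpow {r L : ℝ} (hr : -1 < r) (hL : 0 ≤ L) :
    ∫ u in -L..L, |u| ^ r = 2 * L ^ (r + 1) / (r + 1) := by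
  have hright : ∫ u in (0 : ℝ)..L, |u| ^ r = L ^ (r + 1) / (r + 1) := by
    rw [integral_congr fun u hu => ?_, integral_rpow (Or.inl hr),
      zero_rpow (by linarith : r + 1 ≠ 0), sub_zero]
    rw [uIcc_of_le hL] at hu
    show |u| ^ r = u ^ r
    rw [abs_of_nonneg hu.1]
  have hleft : ∫ u in -L..0, |u| ^ r = ∫ u in (0 : ℝ)..L, |u| ^ r := by
    simpa using (integral_comp_neg (a := 0) (b := L) fun u : ℝ => |u| ^ r).symm
  rw [← integral_add_adjacent_intervals (intervalIntegrable_abs_rpow hr _ _)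
    (intervalIntegrable_abs_rpow hr _ _), hleft, hright]
  ring

theorem intervalIntegrable_abs_sub_rpow {r : ℝ} (hr : -1 < r) (s a b : ℝ) :
    IntervalIntegrable (fun v : ℝ => |s - v| ^ r) volume a b := by
  simpa using (intervalIntegrable_abs_rpow hr (s - a) (s - b)).comp_sub_left s

theorem integral_abs_sub_rpow_le {r s a b L : ℝ} (hr : -1 < r) (ha : s - L ≤ a) (hab : a ≤ b)
    (hb : b ≤ s + L) : ∫ v in a..b, |s - v| ^ r ≤ 2 * L ^ (r + 1) / (r + 1) := by
  have hshift : ∫ v in (s - L)..(s + L), |s - v| ^ r = ∫ u in -L..L, |u| ^ r := by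
    rw [integral_comp_sub_left (fun u => |u| ^ r)]
    ring_nf
  calc ∫ v in a..b, |s - v| ^ r ≤ ∫ v in (s - L)..(s + L), |s - v| ^ r :=
        integral_mono_interval ha hab hb (Filter.Eventually.of_forall fun v => by positivity)
          (intervalIntegrable_abs_sub_rpow hr s _ _)
    _ = 2 * L ^ (r + 1) / (r + 1) := by
      rw [hshift, integral_neg_self_abs_rpow hr (by linarith)]

theorem integral_one_two_abs_sub_rpow_le {r : ℝ} (hr : -1 < r) (hr0 : r ≤ 0) (s : ℝ) :
    ∫ v in (1 : ℝ)..2, |s - v| ^ r ≤ 4 / (r + 1) := by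
  have hr1 : 0 < r + 1 := by linarith
  by_cases hs : 0 ≤ s ∧ s ≤ 3
  · calc ∫ v in (1 : ℝ)..2, |s - v| ^ r ≤ 2 * 2 ^ (r + 1) / (r + 1) :=
          integral_abs_sub_rpow_le hr (by linarith) one_le_two (by linarith)
      _ ≤ 4 / (r + 1) := by
          gcongr
          calc (2 : ℝ) * 2 ^ (r + 1) ≤ 2 * 2 ^ (1 : ℝ) := by
                gcongr; norm_num; linarith
            _ = 4 := by norm_num
  · have hfar : ∀ v ∈ uIoc (1 : ℝ) 2, ‖|s - v| ^ r‖ ≤ 1 := by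
      intro v hv
      rw [uIoc_of_le one_le_two] at hv
      rw [norm_of_nonneg (by positivity)]
      refine rpow_le_one_of_one_le_of_nonpos ?_ hr0
      rcases not_and_or.1 hs with h | h
      · rw [abs_sub_comm, le_abs]; left; linarith [hv.1]
      · rw [le_abs]; left; linarith [hv.2]
    calc ∫ v in (1 : ℝ)..2, |s - v| ^ r ≤ ‖∫ v in (1 : ℝ)..2, |s - v| ^ r‖ := le_norm_self _
      _ ≤ 1 * |2 - 1| := norm_integral_le_of_norm_le_const hfar
      _ ≤ 4 / (r + 1) := by
          rw [le_div_iff₀ hr1]; norm_num; linarith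

theorem integral_integral_min_rpow_le {w : ℝ → ℝ} {B c d p α M : ℝ} (hB : 0 < B) (hcd : c ≤ d)
    (hw : ∀ v, 0 ≤ w v) (hα : 0 ≤ α) (hαp : α + 1 < p)
    (hwi : IntervalIntegrable (fun v => w v ^ (-α)) volume c d)
    (hM : ∫ v in c..d, w v ^ (-α) ≤ M) :
    ∫ x in B..1, ∫ v in c..d, min ((B / x) ^ p) (w v ^ (-p)) ≤ B * M / (p - α - 1) := by
  have hM0 : 0 ≤ M := (integral_nonneg hcd fun v _ => rpow_nonneg (hw v) _).trans hM
  have hpα : 0 < p - α - 1 := by linarith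
  rcases le_or_gt B 1 with hB1 | hB1
  · have hinner : ∀ x ∈ Icc B 1,
        ∫ v in c..d, min ((B / x) ^ p) (w v ^ (-p)) ≤ (B / x) ^ (p - α) * M := by
      intro x hx
      have hBx : 0 ≤ B / x := div_nonneg hB.le (hB.le.trans hx.1)
      calc ∫ v in c..d, min ((B / x) ^ p) (w v ^ (-p))
          ≤ ∫ v in c..d, (B / x) ^ (p - α) * w v ^ (-α) :=
            integral_mono_on_of_nonneg hcd (hwi.const_mul _)
              (fun v _ => mul_nonneg (rpow_nonneg hBx _) (rpow_nonneg (hw v) _))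
              fun v _ => min_rpow_rpow_neg_le hBx (hw v) (by linarith) hα (by linarith)
        _ = (B / x) ^ (p - α) * ∫ v in c..d, w v ^ (-α) :=
            intervalIntegral.integral_const_mul _ _
        _ ≤ (B / x) ^ (p - α) * M := by gcongr
    calc ∫ x in B..1, ∫ v in c..d, min ((B / x) ^ p) (w v ^ (-p))
        ≤ ∫ x in B..1, (B / x) ^ (p - α) * M :=
          integral_mono_on_of_nonneg hB1 ((intervalIntegrable_div_rpow hB hB1).mul_const M)
            (fun x hx => mul_nonneg (rpow_nonneg (div_nonneg hB.le (hB.le.trans hx.1)) _) hM0)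
            hinner
      _ = (∫ x in B..1, (B / x) ^ (p - α)) * M := intervalIntegral.integral_mul_const _ _
      _ ≤ B / (p - α - 1) * M := by
          gcongr
          simpa [sub_sub] using integral_div_rpow_le hB hB1 (by linarith : 1 < p - α)
      _ = B * M / (p - α - 1) := by ring
  · have hrev : 0 ≤ ∫ x in (1 : ℝ)..B, ∫ v in c..d, min ((B / x) ^ p) (w v ^ (-p)) :=
      integral_nonneg hB1.le fun x hx => integral_nonneg hcd fun v _ =>
        le_min (rpow_nonneg (div_nonneg hB.le (zero_le_one.trans hx.1)) _) (rpow_nonneg (hw v) _)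
    rw [integral_symm]
    have : 0 ≤ B * M / (p - α - 1) := div_nonneg (mul_nonneg hB.le hM0) hpα.le
    linarith

theorem integral_one_two_abs_sub_mul_rpow_le {K τ δ : ℝ} (hK : 0 < K) (hδ0 : 0 < δ)
    (hδ1 : δ ≤ 1) :
    IntervalIntegrable (fun v => |τ - K * v| ^ (-(1 - δ))) volume 1 2 ∧
      ∫ v in (1 : ℝ)..2, |τ - K * v| ^ (-(1 - δ)) ≤ 4 / δ * (K ^ δ / K) := by
  have hscale : (fun v => |τ - K * v| ^ (-(1 - δ))) =
      fun v => K ^ δ / K * |τ / K - v| ^ (δ - 1) := by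
    funext v
    rw [show τ - K * v = K * (τ / K - v) by field_simp, abs_mul, abs_of_pos hK,
      mul_rpow hK.le (abs_nonneg _), neg_sub, rpow_sub_one hK.ne']
  have hr : -1 < δ - 1 := by linarith
  rw [hscale]
  refine ⟨(intervalIntegrable_abs_sub_rpow hr _ _ _).const_mul _, ?_⟩
  rw [intervalIntegral.integral_const_mul, mul_comm (4 / δ)]
  gcongr
  simpa using integral_one_two_abs_sub_rpow_le hr (by linarith) (τ / K)

theorem half_abs_le_abs_sub_mul {K τ v : ℝ} (hK : 0 ≤ K) (hτ : 4 * K ≤ |τ|)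
    (hv : v ∈ Icc (0 : ℝ) 2) :
    |τ| / 2 ≤ |τ - K * v| := by
  have hKv : |K * v| ≤ 2 * K := by
    rw [abs_of_nonneg (mul_nonneg hK hv.1)]; nlinarith [hv.2]
  linarith [abs_sub_abs_le_abs_sub τ (K * v)]

theorem integral_one_two_abs_sub_mul_inv_le {K τ : ℝ} (hK : 0 ≤ K) (hτ : 4 * K ≤ |τ|)
    (hτ0 : τ ≠ 0) :
    IntervalIntegrable (fun v => |τ - K * v| ^ (-1 : ℝ)) volume 1 2 ∧
      ∫ v in (1 : ℝ)..2, |τ - K * v| ^ (-1 : ℝ) ≤ 2 / |τ| := by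
  have hτpos : 0 < |τ| := abs_pos.2 hτ0
  have hfar : ∀ v ∈ Icc (1 : ℝ) 2, |τ| / 2 ≤ |τ - K * v| := fun v hv =>
    half_abs_le_abs_sub_mul hK hτ ⟨by linarith [hv.1], hv.2⟩
  refine ⟨ContinuousOn.intervalIntegrable fun v hv => ?_, ?_⟩
  · rw [uIcc_of_le one_le_two] at hv
    exact (ContinuousAt.rpow_const (by fun_prop)
      (Or.inl (by linarith [hfar v hv]))).continuousWithinAt
  · have hbound : ∀ v ∈ uIoc (1 : ℝ) 2, ‖|τ - K * v| ^ (-1 : ℝ)‖ ≤ 2 / |τ| := by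
      intro v hv
      rw [uIoc_of_le one_le_two] at hv
      have h := hfar v (Ioc_subset_Icc_self hv)
      rw [norm_of_nonneg (by positivity), rpow_neg_one, ← inv_div]
      exact inv_anti₀ (by positivity) h
    calc ∫ v in (1 : ℝ)..2, |τ - K * v| ^ (-1 : ℝ)
        ≤ ‖∫ v in (1 : ℝ)..2, |τ - K * v| ^ (-1 : ℝ)‖ := le_norm_self _
      _ ≤ 2 / |τ| * |2 - 1| := norm_integral_le_of_norm_le_const hbound
      _ = 2 / |τ| := by norm_num

theorem integral_integral_min_le {B K τ δ : ℝ} (hB : 0 < B) (hK : 1 ≤ K) (hδ0 : 0 < δ)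
    (hδ1 : δ ≤ 1 / 2) :
    ∫ x in B..1, ∫ v in (1 : ℝ)..2,
        min ((B / x) ^ ((5 : ℝ) / 2)) (|τ - K * v| ^ (-(5 : ℝ) / 2)) ≤
      16 / δ * (B * (K ^ δ / K)) * (if τ = 0 then 1 else min 1 (100 * K / |τ|)) := by
  have hK0 : 0 < K := by linarith
  have hw : ∀ v, 0 ≤ |τ - K * v| := fun v => abs_nonneg _
  rw [neg_div]
  rcases le_or_gt |τ| (200 * K) with hτ | hτ
  · have hfactor : 1 / 2 ≤ (if τ = 0 then (1 : ℝ) else min 1 (100 * K / |τ|)) := by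
      split_ifs with hτ0
      · norm_num
      · exact le_min (by norm_num) (by rw [le_div_iff₀ (abs_pos.2 hτ0)]; linarith)
    obtain ⟨hwi, hM⟩ := integral_one_two_abs_sub_mul_rpow_le (τ := τ) hK0 hδ0 (by linarith)
    calc _ ≤ B * (4 / δ * (K ^ δ / K)) / (5 / 2 - (1 - δ) - 1) :=
          integral_integral_min_rpow_le hB one_le_two hw (by linarith) (by linarith) hwi hM
      _ ≤ 16 / δ * (B * (K ^ δ / K)) * (1 / 2) := by
          rw [div_le_iff₀ (by linarith)]
          have hX : 0 ≤ 4 / δ * (B * (K ^ δ / K)) * (2 * δ) := by positivity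
          linarith [show 16 / δ * (B * (K ^ δ / K)) * (1 / 2) * (5 / 2 - (1 - δ) - 1) =
            B * (4 / δ * (K ^ δ / K)) + 4 / δ * (B * (K ^ δ / K)) * (2 * δ) by ring]
      _ ≤ _ := by gcongr
  · have hτ0 : τ ≠ 0 := by rintro rfl; rw [abs_zero] at hτ; linarith
    have hτpos : 0 < |τ| := abs_pos.2 hτ0
    obtain ⟨hwi, hM⟩ := integral_one_two_abs_sub_mul_inv_le hK0.le (by linarith) hτ0
    have hKδ : 1 ≤ K ^ δ := one_le_rpow hK hδ0.le
    have hconst : 4 ≤ 1600 / δ * K ^ δ := by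
      rw [div_mul_eq_mul_div, le_div_iff₀ hδ0]
      nlinarith
    rw [if_neg hτ0, min_eq_right (by rw [div_le_one hτpos]; linarith)]
    calc _ ≤ B * (2 / |τ|) / (5 / 2 - 1 - 1) :=
          integral_integral_min_rpow_le hB one_le_two hw zero_le_one (by norm_num) hwi hM
      _ = B / |τ| * 4 := by ring
      _ ≤ B / |τ| * (1600 / δ * K ^ δ) := by gcongr
      _ = 16 / δ * (B * (K ^ δ / K)) * (100 * K / |τ|) := by field_simp; ring

/-- Error-term estimate for
`E(τ) = t^{-1/2} ∫_{aq/N}^1 ∫_1^2 min{(aq/(Nx))^{5/2}, |τ−Kv|^{-5/2}} dv dx`: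
`E(τ) ≪_ε (aq t^ε/(NK√t)) · min{1, 100K/|τ|}` for `a ≍ (N/K)^{1/2}`. -/
theorem error_term_E_tau_bound :
    ∀ ε > (0:ℝ), ∀ c₁ c₂ : ℝ, 0 < c₁ → c₁ ≤ c₂ → ∃ C > 0,
      ∀ t K N a q τ : ℝ, 2 ≤ t → 1 ≤ K → K ≤ t → 1 ≤ N → 1 ≤ q →
        c₁ * Real.sqrt (N / K) ≤ a → a ≤ c₂ * Real.sqrt (N / K) →
        t ^ (-(1/2 : ℝ)) *
          ∫ x in (a * q / N)..1, ∫ v in (1:ℝ)..2,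
            min ((a * q / (N * x)) ^ ((5:ℝ)/2)) (|τ - K * v| ^ (-(5:ℝ)/2)) ≤
        C * (a * q * t ^ ε / (N * K * Real.sqrt t)) *
          (if τ = 0 then 1 else min 1 (100 * K / |τ|)) := by
  intro ε hε c₁ c₂ hc₁ _
  obtain ⟨δ, hδ0, hδε, hδ1⟩ : ∃ δ : ℝ, 0 < δ ∧ δ ≤ ε ∧ δ ≤ 1 / 2 :=
    ⟨min ε 1 / 2, by positivity, by linarith [min_le_left ε 1], by linarith [min_le_right ε 1]⟩
  refine ⟨16 / δ, by positivity, ?_⟩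
  intro t K N a q τ ht hK hKt hN hq ha _
  have ha0 : 0 < a := (mul_pos hc₁ (sqrt_pos.2 (by positivity))).trans_le ha
  have hKδ : K ^ δ ≤ t ^ ε :=
    (rpow_le_rpow (by linarith) hKt hδ0.le).trans
      (rpow_le_rpow_of_exponent_le (by linarith) hδε)
  simp only [← div_div (a * q) N]
  calc t ^ (-(1 / 2 : ℝ)) * ∫ x in (a * q / N)..1, ∫ v in (1 : ℝ)..2,
        min ((a * q / N / x) ^ ((5 : ℝ) / 2)) (|τ - K * v| ^ (-(5 : ℝ) / 2))
      ≤ (√t)⁻¹ * (16 / δ * (a * q / N * (K ^ δ / K)) * _) := by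
        rw [rpow_neg (by linarith), ← sqrt_eq_rpow]
        gcongr
        exact integral_integral_min_le (by positivity) hK hδ0 hδ1
    _ ≤ (√t)⁻¹ * (16 / δ * (a * q / N * (t ^ ε / K)) * _) := by
        have hfactor0 : 0 ≤ (if τ = 0 then (1 : ℝ) else min 1 (100 * K / |τ|)) := by
          split_ifs
          · exact zero_le_one
          · exact le_min zero_le_one (by positivity)
        gcongr
    _ = _ := by ring
end
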